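/- The presented group on three generators x₁, x₂, x₃ with defining relations (x₂x₃)² = (x₃x₂)², (x₁x₃)² = (x₃x₁)², x₁x₂ = x₂x₁, and x₂·(x₃x₁x₃⁻¹) = (x₃x₁x₃⁻¹)·x₂ is big, i.e. it contains a subgroup which is free of rank 2. -/

import Mathlib

/-!
Killing `x₂` and imposing `(x₃x₁)² = 1` satisfies every relation (then `x₁x₃ = x₁(x₃x₁)x₁⁻¹`
is an involution too), so the group maps onto `⟨a, s | s² = 1⟩` with `a = x₁`, `s = x₃x₁`. There
`a` and `sas⁻¹` generate a free group: realise `a` as the shear `(x, y) ↦ (x, y + 4x)` and `s` as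
the coordinate swap, and play ping-pong on the nonzero vectors of the plane.
-/

namespace Stmt15

/-- A group `G` is big if it contains a free subgroup of rank 2, i.e. there is an
injective group homomorphism from the free group on two generators into `G`. -/
def Big (G : Type*) [Group G] : Prop :=
  ∃ f : FreeGroup (Fin 2) →* G, Function.Injective f

/-- Generators `x₁, x₂, x₃` of the free group, indexed by `0, 1, 2`. -/
def x (i : Fin 3) : FreeGroup (Fin 3) := FreeGroup.of i

/-- The relators of the presentation with defining relations `(x₂x₃)² = (x₃x₂)²`,
`(x₁x₃)² = (x₃x₁)²`, `x₁x₂ = x₂x₁` and `x₂(x₃x₁x₃⁻¹) = (x₃x₁x₃⁻¹)x₂`. -/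
def rels : Set (FreeGroup (Fin 3)) :=
  { (x 1 * x 2) ^ 2 * ((x 2 * x 1) ^ 2)⁻¹,
    (x 0 * x 2) ^ 2 * ((x 2 * x 0) ^ 2)⁻¹,
    x 0 * x 1 * (x 1 * x 0)⁻¹,
    x 1 * (x 2 * x 0 * (x 2)⁻¹) * ((x 2 * x 0 * (x 2)⁻¹) * x 1)⁻¹ }

open Function Pointwise

lemma Big.of_injective_comp {G H : Type*} [Group G] [Group H] (f : FreeGroup (Fin 2) →* G)
    (φ : G →* H) (h : Injective (φ.comp f)) : Big G :=
  ⟨f, h.of_comp (f := φ)⟩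

lemma lift_rels_eq_one {H : Type*} [Group H] (a u : H) (hu : u ^ 2 = 1) :
    ∀ r ∈ rels, FreeGroup.lift ![a, 1, u * a⁻¹] r = 1 := by
  have hconj : (a * (u * a⁻¹)) ^ 2 = 1 := by
    rw [← mul_assoc, conj_pow, hu, mul_one, mul_inv_cancel]
  rintro r (rfl | rfl | rfl | rfl) <;> simp [x, hconj, hu, mul_assoc]

lemma big_of_injective_lift_conj {H : Type*} [Group H] (a u : H) (hu : u ^ 2 = 1)
    (hfree : Injective (FreeGroup.lift ![a, u * a * u⁻¹])) : Big (PresentedGroup rels) := by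
  set s : PresentedGroup rels := .of 2 * .of 0
  refine Big.of_injective_comp (FreeGroup.lift ![.of 0, s * .of 0 * s⁻¹])
    (PresentedGroup.toGroup (lift_rels_eq_one a u hu)) ?_
  convert hfree
  refine FreeGroup.ext_hom _ _ fun i => ?_
  fin_cases i <;> simp [s, mul_assoc]

lemma pairwise_disjoint_fin_two {α : Type*} {s : Fin 2 → Set α} (h : Disjoint (s 0) (s 1)) :
    Pairwise (Disjoint on s) := by
  intro i j hij
  fin_cases i <;> fin_cases j
  exacts [absurd rfl hij, h, h.symm, absurd rfl hij]

section NonzeroVectors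

variable (R M : Type*) [Semiring R] [AddCommMonoid M] [Module R M]

def nonzeroVectors : SubMulAction (M ≃ₗ[R] M) M where
  carrier := {v | v ≠ 0}
  smul_mem' g _ hv := (LinearEquiv.map_ne_zero_iff g).mpr hv

variable {R M} in
@[simp]
lemma mem_nonzeroVectors {v : M} : v ∈ nonzeroVectors R M ↔ v ≠ 0 := Iff.rfl

end NonzeroVectors

def shear : (ℝ × ℝ) ≃ₗ[ℝ] ℝ × ℝ :=
  LinearEquiv.skewProd (.refl ℝ ℝ) (.refl ℝ ℝ) ((4 : ℝ) • LinearMap.id)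

def coordSwap : (ℝ × ℝ) ≃ₗ[ℝ] ℝ × ℝ := LinearEquiv.prodComm ℝ ℝ ℝ

lemma coordSwap_sq : coordSwap ^ 2 = 1 := LinearEquiv.ext fun _ => rfl

def shearPair : Fin 2 → (ℝ × ℝ) ≃ₗ[ℝ] ℝ × ℝ := ![shear, coordSwap * shear * coordSwap⁻¹]

@[simp]
lemma shearPair_zero_apply (v : ℝ × ℝ) : shearPair 0 v = (v.1, v.2 + 4 * v.1) := rfl

@[simp]
lemma shearPair_one_apply (v : ℝ × ℝ) : shearPair 1 v = (v.1 + 4 * v.2, v.2) := rfl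

@[simp]
lemma shearPair_zero_inv_apply (v : ℝ × ℝ) : (shearPair 0)⁻¹ v = (v.1, v.2 - 4 * v.1) := rfl

@[simp]
lemma shearPair_one_inv_apply (v : ℝ × ℝ) : (shearPair 1)⁻¹ v = (v.1 - 4 * v.2, v.2) := rfl

abbrev NonzeroPlane : Type := nonzeroVectors ℝ (ℝ × ℝ)

/- In the slope `t = y / x` (for `i = 0`) or `t = x / y` (for `i = 1`), `shearPair i` acts by
`t ↦ t + 4`, `attracting i` is `{t ≥ 2} ∪ {∞}` and `repelling i` is `{t < -2}`. -/
def attracting : Fin 2 → Set NonzeroPlane :=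
  ![{v | 2 * v.1.1 ^ 2 ≤ v.1.1 * v.1.2}, {v | 2 * v.1.2 ^ 2 ≤ v.1.1 * v.1.2}]

def repelling : Fin 2 → Set NonzeroPlane :=
  ![{v | v.1.1 * v.1.2 < -2 * v.1.1 ^ 2}, {v | v.1.1 * v.1.2 < -2 * v.1.2 ^ 2}]

lemma attracting_nonempty (i : Fin 2) : (attracting i).Nonempty := by
  fin_cases i
  · exact ⟨⟨(0, 1), by simp⟩, by simp [attracting]⟩
  · exact ⟨⟨(1, 0), by simp⟩, by simp [attracting]⟩

lemma eq_zero_of_two_sq_le_mul {a b : ℝ} (ha : 2 * a ^ 2 ≤ a * b) (hb : 2 * b ^ 2 ≤ a * b) :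
    (a, b) = 0 := by
  ext <;> dsimp <;> nlinarith [sq_nonneg (a - b), sq_nonneg a, sq_nonneg b]

lemma pairwise_disjoint_attracting : Pairwise (Disjoint on attracting) :=
  pairwise_disjoint_fin_two <| Set.disjoint_left.mpr fun v h₀ h₁ =>
    v.2 (eq_zero_of_two_sq_le_mul h₀ h₁)

lemma pairwise_disjoint_repelling : Pairwise (Disjoint on repelling) :=
  pairwise_disjoint_fin_two <| Set.disjoint_left.mpr
    fun v (h₀ : _ < -2 * v.1.1 ^ 2) (h₁ : _ < -2 * v.1.2 ^ 2) => by nlinarith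

lemma disjoint_attracting_repelling : ∀ i j, Disjoint (attracting i) (repelling j) := by
  simp only [Fin.forall_fin_two, attracting, repelling, Matrix.cons_val_zero,
    Matrix.cons_val_one, Set.disjoint_left, Set.mem_ofPred_eq, not_lt]
  refine ⟨⟨?_, ?_⟩, ?_, ?_⟩ <;> intro v hi <;> nlinarith

lemma shearPair_smul_compl_repelling : ∀ i, shearPair i • (repelling i)ᶜ ⊆ attracting i := by
  simp only [Fin.forall_fin_two, attracting, repelling, Matrix.cons_val_zero,
    Matrix.cons_val_one, Set.smul_set_subset_iff, Set.mem_compl_iff, Set.mem_ofPred_eq, not_lt,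
    SetLike.val_smul, LinearEquiv.smul_def, shearPair_zero_apply, shearPair_one_apply]
  constructor <;> intro v hv <;> nlinarith

lemma shearPair_inv_smul_compl_attracting :
    ∀ i, shearPair⁻¹ i • (attracting i)ᶜ ⊆ repelling i := by
  simp only [Fin.forall_fin_two, attracting, repelling, Pi.inv_apply, Matrix.cons_val_zero,
    Matrix.cons_val_one, Set.smul_set_subset_iff, Set.mem_compl_iff, Set.mem_ofPred_eq, not_le,
    SetLike.val_smul, LinearEquiv.smul_def, shearPair_zero_inv_apply, shearPair_one_inv_apply]
  constructor <;> intro v hv <;> nlinarith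

lemma injective_lift_shearPair : Injective (FreeGroup.lift shearPair) :=
  FreeGroup.injective_lift_of_ping_pong shearPair attracting repelling attracting_nonempty
    pairwise_disjoint_attracting pairwise_disjoint_repelling disjoint_attracting_repelling
    shearPair_smul_compl_repelling shearPair_inv_smul_compl_attracting

theorem presentedGroup_big : Big (PresentedGroup rels) :=
  big_of_injective_lift_conj shear coordSwap coordSwap_sq injective_lift_shearPair

end Stmt15
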